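/- In the decision-maker-optimal mechanism M^d built from the expert-friendly myopic strategy σ^h (at each chain, among myopically optimal contracts choose the V_e-maximal one), the expert's induced payoff is monotone in the decision maker's report in the expert's favor: for h' ≼ h and any chain H = (H₀,…,H_n) feasible from h toward expert type h^e, the 'prefixed' chain H' = (h', H₀, …, H_n) satisfies V_e(H, σ^h) ≤ V_e(H', σ^{h'}). -/
import Mathlib


/-- A consistent sequence beginning at `h`. -/
def Cons {𝓗 : Type} [Preorder 𝓗] (h : 𝓗) (H : List 𝓗) : Prop :=
  H ≠ [] ∧ H.head? = some h ∧ H.Chain' (· < ·)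

/-- Membership in the myopic argmax set `ξ(H, σ)` for chains starting at `h`. -/
def InXi {𝓗 : Type} [Preorder 𝓗] (h : 𝓗) {C : 𝓗 → Type} (Vd Ve : (h' : 𝓗) → C h' → ℝ)
    (σ : (H : List 𝓗) → C (H.getLastD h)) (H : List 𝓗) (c : C (H.getLastD h)) : Prop :=
  (2 ≤ H.length → Ve (H.dropLast.getLastD h) (σ H.dropLast) ≤ Ve (H.getLastD h) c) ∧
  ∀ c' : C (H.getLastD h),
    (2 ≤ H.length → Ve (H.dropLast.getLastD h) (σ H.dropLast) ≤ Ve (H.getLastD h) c') →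
    Vd (H.getLastD h) c' ≤ Vd (H.getLastD h) c


private lemma argmax_mono {a : Type} (Vd Ve : a → ℝ) (t' : ℝ) (P : a → Prop) (c c' : a)
    (hc' : t' ≤ Ve c')
    (himp : ∀ d, t' ≤ Ve d → P d)
    (hVd : ∀ d, P d → Vd d ≤ Vd c)
    (hVd' : ∀ d, t' ≤ Ve d → Vd d ≤ Vd c')
    (hVe' : t' ≤ Ve c → (∀ d, t' ≤ Ve d → Vd d ≤ Vd c) → Ve c ≤ Ve c') :
    Ve c ≤ Ve c' := by
  by_cases hcase : t' ≤ Ve c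
  · exact hVe' hcase (fun d hd => (hVd' d hd).trans (hVd c' (himp c' hc')))
  · linarith

private lemma main_mono {𝓗 : Type} [PartialOrder 𝓗]
    (C : 𝓗 → Type) (Vd Ve : (h : 𝓗) → C h → ℝ)
    (σ : (h : 𝓗) → (H : List 𝓗) → C (H.getLastD h))
    (hσ : ∀ (h : 𝓗) (H : List 𝓗), Cons h H →
      InXi h Vd Ve (σ h) H (σ h H) ∧
      ∀ c : C (H.getLastD h), InXi h Vd Ve (σ h) H c →
        Ve (H.getLastD h) c ≤ Ve (H.getLastD h) (σ h H)) :
    ∀ (n : ℕ) (H : List 𝓗), H.length ≤ n → ∀ h' h : 𝓗, h' < h → Cons h H →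
      Ve (H.getLastD h) (σ h H) ≤ Ve ((h' :: H).getLastD h') (σ h' (h' :: H)) := by
  intro n
  induction n with
  | zero =>
    intro H hlen h' h hlt hH
    obtain ⟨hne, -, -⟩ := hH
    cases H with
    | nil => exact absurd rfl hne
    | cons a l => simp at hlen
  | succ n ih =>
    intro H hlen h' h hlt hH
    obtain ⟨hne, hhead, hchain⟩ := hH
    obtain ⟨b, rest, rfl⟩ := List.exists_cons_of_ne_nil hne
    obtain rfl : b = h := by simpa using hhead
    have hH' : Cons h' (h' :: b :: rest) := by
      refine ⟨List.cons_ne_nil _ _, rfl, ?_⟩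
      exact List.isChain_cons_cons.mpr ⟨hlt, hchain⟩
    have hH : Cons b (b :: rest) := ⟨hne, hhead, hchain⟩
    obtain ⟨⟨hIC', hVd'⟩, hVe'⟩ := hσ h' (h' :: b :: rest) hH'
    obtain ⟨⟨hIC, hVd⟩, hVe⟩ := hσ b (b :: rest) hH
    have hlen2 : 2 ≤ (h' :: b :: rest).length := by simp
    refine argmax_mono (Vd ((b :: rest).getLastD b)) (Ve ((b :: rest).getLastD b))
      (Ve ((h' :: b :: rest).dropLast.getLastD h') (σ h' (h' :: b :: rest).dropLast))
      (fun d => 2 ≤ (b :: rest).length →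
        Ve ((b :: rest).dropLast.getLastD b) (σ b (b :: rest).dropLast) ≤
          Ve ((b :: rest).getLastD b) d)
      (σ b (b :: rest)) (σ h' (h' :: b :: rest))
      (hIC' hlen2) ?_ (fun d hd => hVd d hd) (fun d hd => hVd' d (fun _ => hd))
      (fun h1 h2 => hVe' (σ b (b :: rest)) ⟨fun _ => h1, fun d hd => h2 d (hd hlen2)⟩)
    intro d hd hl
    obtain ⟨c, rest', rfl⟩ : ∃ c r, rest = c :: r := by
      cases rest with
      | nil => simp at hl
      | cons c r => exact ⟨c, r, rfl⟩
    have hD : Cons b ((b :: c :: rest').dropLast) := by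
      refine ⟨by simp [List.dropLast], ?_, ?_⟩
      · simp [List.dropLast]
      · exact hchain.sublist (List.dropLast_sublist _)
    have hlenD : ((b :: c :: rest').dropLast).length ≤ n := by
      simp only [List.length_dropLast, List.length_cons] at *
      omega
    have := ih ((b :: c :: rest').dropLast) hlenD h' b hlt hD
    exact le_trans this hd

/-- for the family `σ^h` of expert-friendly myopic strategies
(at each chain, the `Ve`-maximal element of `ξ`), the expert's payoff is
monotone in the decision maker's initial awareness in the expert's favor:
for `h' ≼ h`, prefixing a feasible chain `H` (from `h`) with `h'` weakly
raises the expert's value (when `h' = h` the prefixed chain is `H` itself). -/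
theorem expert_value_monotone_in_initial_awareness
    {𝓗 : Type} [Fintype 𝓗] [PartialOrder 𝓗] [DecidableEq 𝓗]
    (C : 𝓗 → Type) (Vd Ve : (h : 𝓗) → C h → ℝ)
    (pb : ∀ {h h' : 𝓗}, h ≤ h' → C h → C h')
    (hpbd : ∀ {h h' : 𝓗} (l : h ≤ h') (c : C h), Vd h' (pb l c) = Vd h c)
    (hpbe : ∀ {h h' : 𝓗} (l : h ≤ h') (c : C h), Ve h' (pb l c) = Ve h c)
    (σ : (h : 𝓗) → (H : List 𝓗) → C (H.getLastD h))
    -- each σ^h is myopically optimal and Ve-maximal within ξ at every chain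
    (hσ : ∀ (h : 𝓗) (H : List 𝓗), Cons h H →
      InXi h Vd Ve (σ h) H (σ h H) ∧
      ∀ c : C (H.getLastD h), InXi h Vd Ve (σ h) H c →
        Ve (H.getLastD h) c ≤ Ve (H.getLastD h) (σ h H)) :
    ∀ h' h : 𝓗, h' ≤ h → ∀ H : List 𝓗, Cons h H →
      Ve (H.getLastD h) (σ h H) ≤
        Ve ((if h' = h then H else h' :: H).getLastD h')
          (σ h' (if h' = h then H else h' :: H)) := by
  intro h' h hle H hH
  by_cases heq : h' = h
  · rw [if_pos heq]
    subst heq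
    exact le_rfl
  · rw [if_neg heq]
    exact main_mono C Vd Ve σ hσ H.length H le_rfl h' h (lt_of_le_of_ne hle heq) hH
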